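/- arXiv:1809.08480 — 3 statements merged into one kernel-verified Lean document; each statement's English description precedes it below -/
import Mathlib

section
/- Suppose θ ≤ λ are infinite regular cardinals. Then U(λ⁺, λ⁺, θ, λ) holds; that is, there is a coloring c : [λ⁺]² → θ such that for every χ' < λ, every family A ⊆ [λ⁺]^{χ'} of λ⁺-many pairwise disjoint sets, and every i < θ, there exists B ∈ [A]^{λ⁺} with min(c[a × b]) > i for all pairs a < b from B. -/
open Cardinal Set Ordinal

noncomputable section

/-- `s` (a set in a `Type 1`, such as a set of ordinals) has small cardinality `μ`. -/
def HasCard {α : Type 1} (s : Set α) (μ : Cardinal.{0}) : Prop :=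
  Cardinal.mk s = Cardinal.lift.{1, 0} μ

/-- `a < b` for sets of ordinals: every element of `a` is below every element of `b`. -/
def SetLT (a b : Set Ordinal) : Prop := ∀ α ∈ a, ∀ β ∈ b, α < β

/-- `A` is a family of `κ`-many pairwise disjoint subsets of `κ`, each of cardinality `χ'`. -/
def IsDisjFamily (κ χ' : Cardinal) (A : Set (Set Ordinal)) : Prop :=
  (∀ a ∈ A, a ⊆ Set.Iio κ.ord ∧ HasCard a χ') ∧
    A.PairwiseDisjoint id ∧ HasCard A κ

/-- `A` is a family of `κ`-many pairwise disjoint subsets of `κ`, each of cardinality `< χ`. -/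
def IsDisjFamilyLT (κ χ : Cardinal) (A : Set (Set Ordinal)) : Prop :=
  (∀ a ∈ A, a ⊆ Set.Iio κ.ord ∧ Cardinal.mk a < Cardinal.lift.{1, 0} χ) ∧
    A.PairwiseDisjoint id ∧ HasCard A κ

/-- `c` is a coloring of pairs of ordinals below `κ` with colors `< θ`. -/
def IsColoring (κ θ : Cardinal) (c : Ordinal → Ordinal → Ordinal) : Prop :=
  ∀ α β : Ordinal, α < β → β < κ.ord → c α β < θ.ord

/-- `c` witnesses `U(κ, μ, θ, χ)`. -/
def WitnessU (κ μ θ χ : Cardinal) (c : Ordinal → Ordinal → Ordinal) : Prop :=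
  IsColoring κ θ c ∧
    ∀ χ' < χ, ∀ A : Set (Set Ordinal), IsDisjFamily κ χ' A →
      ∀ i < θ.ord, ∃ B ⊆ A, HasCard B μ ∧
        ∀ a ∈ B, ∀ b ∈ B, SetLT a b → ∀ α ∈ a, ∀ β ∈ b, i < c α β

/-- The principle `U(κ, μ, θ, χ)`. -/
def U (κ μ θ χ : Cardinal) : Prop := ∃ c, WitnessU κ μ θ χ c

/-- `D` is a club in (the ordinal) `o`: a closed and unbounded subset of `o`. -/
def IsClubOrd (D : Set Ordinal) (o : Ordinal) : Prop :=
  D ⊆ Set.Iio o ∧ (∀ α < o, ∃ β ∈ D, α ≤ β) ∧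
    ∀ γ < o, 0 < γ → (∀ x < γ, ∃ β ∈ D, x < β ∧ β < γ) → γ ∈ D

/-- `S` is stationary in `o`: it meets every club in `o`. -/
def IsStationaryOrd (S : Set Ordinal) (o : Ordinal) : Prop :=
  ∀ D, IsClubOrd D o → (S ∩ D).Nonempty

/-!
Let `E = {δ < λ⁺ | cf δ = λ}`. Split `E` into `θ` stationary pieces `E_j` (with an Ulam matrix)
and colour `α < β` by the largest `j` such that the walk from `β` down to `α` along a ladder system
passes through `E_j`. If `cf δ = λ ≤ β < λ⁺` then every ladder met on the way from `β` to `δ` is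
bounded below `δ`, so the walks from `β` to all `α` in some interval `(γ, δ)` pass through `δ`.

Given `A` and a colour `i`, pick for each `δ ∈ E_{i+1}` some `b_δ ∈ A` above `δ`. As `|b_δ| < λ`,
one bound `F δ < δ` serves all `β ∈ b_δ`, and pressing down gives `ε` with `F δ ≤ ε` for unboundedly
many `δ`. Thinning these to a `λ⁺`-sequence in which each `b_δ` lies below all later `δ'` gives `B`:
for `α ∈ b_δ` and `β ∈ b_δ'` the walk from `β` to `α` passes through `δ' ∈ E_{i+1}`.
-/

universe u

theorem Ordinal.iSup_Iio_lt_of_card_lt_cof {o a : Ordinal} (h : o.card < a.cof)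
    {f : Iio o → Ordinal} (hf : ∀ i, f i < a) : ⨆ i, f i < a := by
  apply Ordinal.lift_iSup_lt_of_lt_cof _ hf
  rw [Cardinal.mk_Iio_ordinal, ← Ordinal.lift_cof, Cardinal.lift_lift, Cardinal.lift_lt]
  simpa using h

theorem Ordinal.sSup_lt_of_mk_lt_cof {s : Set Ordinal.{u}} {a : Ordinal.{u}}
    (h : #s < Cardinal.lift.{u + 1} a.cof) (hs : ∀ x ∈ s, x < a) : sSup s < a :=
  Ordinal.sSup_lt_of_lt_cof (by rwa [← Ordinal.lift_cof]) hs

theorem Ordinal.card_le_of_lt_ord_succ {lam : Cardinal} {x : Ordinal}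
    (hx : x < (Order.succ lam).ord) : x.card ≤ lam :=
  Order.lt_succ_iff.1 (Cardinal.lt_ord.1 hx)

theorem exists_mem_forall_lt_of_pairwiseDisjoint {α : Type*} [LinearOrder α] {A : Set (Set α)}
    (hA : A.PairwiseDisjoint id) {δ : α} (h : #(Iic δ) < #A) : ∃ b ∈ A, ∀ x ∈ b, δ < x := by
  by_contra! hle
  have : Nonempty α := ⟨δ⟩
  choose! w hw hwδ using hle
  have hinj : InjOn w A := fun b hb b' hb' hbb' =>
    hA.elim hb hb' (Set.not_disjoint_iff.2 ⟨w b, hw b hb, hbb' ▸ hw b' hb'⟩)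
  rw [← Cardinal.mk_image_eq_of_injOn w A hinj] at h
  exact h.not_ge (Cardinal.mk_le_mk_of_subset (image_subset_iff.2 hwδ))

theorem SetLT.not_self {a : Set Ordinal} (ha : a.Nonempty) : ¬ SetLT a a := fun h =>
  ha.elim fun x hx => (h x hx x hx).false

theorem IsDisjFamily.nonempty_of_mem {κ χ' : Cardinal.{0}} {A : Set (Set Ordinal)} (hκ : 1 < κ)
    (hA : IsDisjFamily κ χ' A) {a : Set Ordinal} (ha : a ∈ A) : a.Nonempty := by
  by_contra hempty
  have hχ' : χ' = 0 := by
    have h := (hA.1 a ha).2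
    rw [HasCard, Cardinal.mk_set_eq_zero_iff.2 (not_nonempty_iff_eq_empty.1 hempty)] at h
    exact Cardinal.lift_eq_zero.1 h.symm
  have hsub : A.Subsingleton := fun b hb b' hb' => by
    have h b (hb : b ∈ A) : b = ∅ := by
      rw [← Cardinal.mk_set_eq_zero_iff, (hA.1 b hb).2, hχ', Cardinal.lift_zero]
    rw [h b hb, h b' hb']
  have h := Cardinal.mk_le_one_iff_set_subsingleton.2 hsub
  rw [hA.2.2, Cardinal.lift_le_one_iff] at h
  exact h.not_gt hκ

theorem IsClubOrd.exists_gt {D : Set Ordinal} {o : Ordinal} (hD : IsClubOrd D o)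
    (ho : Order.IsSuccLimit o) {y : Ordinal} (hy : y < o) : ∃ z ∈ D, y < z ∧ z < o := by
  obtain ⟨z, hz, hyz⟩ := hD.2.1 _ (ho.succ_lt hy)
  exact ⟨z, hz, (Order.lt_succ y).trans_le hyz, hD.1 hz⟩

theorem IsStationaryOrd.mono {S T : Set Ordinal} {o : Ordinal} (hS : IsStationaryOrd S o)
    (hST : S ⊆ T) : IsStationaryOrd T o := fun D hD =>
  (hS D hD).mono (Set.inter_subset_inter_left D hST)

theorem IsStationaryOrd.inter_Ioi {S : Set Ordinal} {o ε : Ordinal} (hS : IsStationaryOrd S o)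
    (ho : Order.IsSuccLimit o) (hε : ε < o) : IsStationaryOrd (S ∩ Ioi ε) o := by
  intro D hD
  have hDε : IsClubOrd (D ∩ Ioi ε) o := by
    refine ⟨fun x hx => hD.1 hx.1, fun α hα => ?_, fun γ hγ hγ₀ hcl => ⟨hD.2.2 γ hγ hγ₀ ?_, ?_⟩⟩
    · obtain ⟨z, hz, hlt, -⟩ := hD.exists_gt ho (max_lt hα hε)
      exact ⟨z, ⟨hz, (le_max_right α ε).trans_lt hlt⟩, (le_max_left α ε).trans hlt.le⟩
    · intro x hx
      obtain ⟨β, hβ, hxβ, hβγ⟩ := hcl x hx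
      exact ⟨β, hβ.1, hxβ, hβγ⟩
    · obtain ⟨β, hβ, -, hβγ⟩ := hcl 0 hγ₀
      exact hβ.2.trans hβγ
  obtain ⟨δ, hδS, hδD, hδε⟩ := hS _ hDε
  exact ⟨δ, ⟨hδS, hδε⟩, hδD⟩

section Regular

variable {κ : Cardinal.{u}} (hκ : κ.IsRegular)
include hκ

theorem Cardinal.IsRegular.iSup_Iio_lt {ξ : Ordinal} (hξ : ξ < κ.ord) {f : Iio ξ → Ordinal}
    (hf : ∀ i, f i < κ.ord) : ⨆ i, f i < κ.ord :=
  Ordinal.iSup_Iio_lt_of_card_lt_cof (by rwa [hκ.cof_ord, ← Cardinal.lt_ord]) hf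

theorem isClubOrd_setOf_forall_lt (hκ₀ : ℵ₀ < κ) (g : Ordinal → Ordinal)
    (hg : ∀ y < κ.ord, g y < κ.ord) : IsClubOrd {x | x < κ.ord ∧ ∀ y < x, g y < x} κ.ord := by
  have hlim : Order.IsSuccLimit κ.ord := Cardinal.isSuccLimit_ord hκ₀.le
  refine ⟨fun x hx => hx.1, fun α hα => ?_, fun γ hγ _ hcl => ⟨hγ, fun y hy => ?_⟩⟩
  · let h : Ordinal → Ordinal := fun z => ⨆ y : Iio z, Order.succ (g y)
    have hh : ∀ z < κ.ord, h z < κ.ord := fun z hz =>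
      hκ.iSup_Iio_lt hz fun y => hlim.succ_lt (hg y (y.2.trans hz))
    refine ⟨Ordinal.nfp h α, ⟨Ordinal.nfp_lt_ord (by rwa [hκ.cof_ord]) hh hα, fun y hy => ?_⟩,
      Ordinal.le_nfp h α⟩
    obtain ⟨n, hn⟩ := Ordinal.lt_nfp_iff.1 hy
    calc g y < Order.succ (g y) := Order.lt_succ _
      _ ≤ h (h^[n] α) := Ordinal.le_iSup (fun y : Iio (h^[n] α) => Order.succ (g y)) ⟨y, hn⟩
      _ = h^[n + 1] α := (Function.iterate_succ_apply' h n α).symm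
      _ ≤ Ordinal.nfp h α := Ordinal.iterate_le_nfp h α (n + 1)
  · obtain ⟨z, hz, hyz, hzγ⟩ := hcl y hy
    exact (hz.2 y hyz).trans hzγ

theorem IsClubOrd.iInter_lt (hκ₀ : ℵ₀ < κ) {μ : Cardinal} (hμ : μ < κ)
    {D : Ordinal → Set Ordinal} (hD : ∀ ζ < μ.ord, IsClubOrd (D ζ) κ.ord) :
    IsClubOrd {x | x < κ.ord ∧ ∀ ζ < μ.ord, x ∈ D ζ} κ.ord := by
  have hlim : Order.IsSuccLimit κ.ord := Cardinal.isSuccLimit_ord hκ₀.le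
  have hμκ : μ.ord < κ.ord := Cardinal.ord_lt_ord.2 hμ
  choose! next hnextD hnext hnextκ using fun ζ hζ y (hy : y < κ.ord) => (hD ζ hζ).exists_gt hlim hy
  let g : Ordinal → Ordinal := fun y => ⨆ ζ : Iio μ.ord, next ζ y
  have hg : ∀ y < κ.ord, g y < κ.ord := fun y hy =>
    hκ.iSup_Iio_lt hμκ fun ζ => hnextκ ζ ζ.2 y hy
  refine ⟨fun x hx => hx.1, fun α hα => ?_, fun γ hγ hγ₀ hcl => ⟨hγ, fun ζ hζ => ?_⟩⟩
  · obtain ⟨x, ⟨hx, hxg⟩, hαx⟩ := (isClubOrd_setOf_forall_lt hκ hκ₀ g hg).2.1 _ (hlim.succ_lt hα)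
    refine ⟨x, ⟨hx, fun ζ hζ => (hD ζ hζ).2.2 x hx ?_ fun y hy => ?_⟩, (Order.le_succ α).trans hαx⟩
    · exact (zero_le (a := α)).trans_lt ((Order.lt_succ α).trans_le hαx)
    · exact ⟨next ζ y, hnextD ζ hζ y (hy.trans hx), hnext ζ hζ y (hy.trans hx),
        (Ordinal.le_iSup (fun ζ : Iio μ.ord => next ζ y) ⟨ζ, hζ⟩).trans_lt (hxg y hy)⟩
  · refine (hD ζ hζ).2.2 γ hγ hγ₀ fun y hy => ?_
    obtain ⟨z, hz, hyz, hzγ⟩ := hcl y hy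
    exact ⟨z, hz.2 ζ hζ, hyz, hzγ⟩

theorem IsStationaryOrd.exists_isStationaryOrd_of_cover (hκ₀ : ℵ₀ < κ) {μ : Cardinal}
    (hμ : μ < κ) {S : Set Ordinal} (hS : IsStationaryOrd S κ.ord) {T : Ordinal → Set Ordinal}
    (hST : ∀ δ ∈ S, δ < κ.ord → ∃ ζ < μ.ord, δ ∈ T ζ) :
    ∃ ζ < μ.ord, IsStationaryOrd (T ζ) κ.ord := by
  by_contra! h
  simp only [IsStationaryOrd, not_forall, Set.not_nonempty_iff_eq_empty] at h
  choose! D hD hTD using h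
  obtain ⟨δ, hδS, hδ, hδD⟩ := hS _ (IsClubOrd.iInter_lt hκ hκ₀ hμ hD)
  obtain ⟨ζ, hζ, hδT⟩ := hST δ hδS hδ
  exact (hTD ζ hζ).subset ⟨hδT, hδD ζ hζ⟩

theorem IsStationaryOrd.exists_le_of_regressive (hκ₀ : ℵ₀ < κ) {S : Set Ordinal}
    (hS : IsStationaryOrd S κ.ord) {F : Ordinal → Ordinal} (hF : ∀ δ ∈ S, δ < κ.ord → F δ < δ) :
    ∃ ε < κ.ord, ∀ α < κ.ord, ∃ δ ∈ S, α < δ ∧ δ < κ.ord ∧ F δ ≤ ε := by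
  by_contra! h
  choose! b hb hbS using h
  obtain ⟨δ, hδS, hδ, hδb⟩ := hS _ (isClubOrd_setOf_forall_lt hκ hκ₀ b hb)
  have hFδ := hF δ hδS hδ
  exact (hbS _ (hFδ.trans hδ) δ hδS (hδb _ hFδ) hδ).false

theorem exists_seq_mem_forall_lt {X : Set Ordinal} (hX : ∀ y < κ.ord, ∃ z ∈ X, y < z ∧ z < κ.ord)
    (s : Ordinal → Ordinal) (hs : ∀ z ∈ X, z < κ.ord → s z < κ.ord) :
    ∃ d : Ordinal → Ordinal, ∀ ξ < κ.ord, d ξ ∈ X ∧ d ξ < κ.ord ∧ ∀ η < ξ, s (d η) < d ξ := by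
  choose! next hnextX hnext hnextκ using hX
  let d : Ordinal → Ordinal :=
    wellFounded_lt.fix fun ξ IH => next (⨆ η : Iio ξ, s (IH η η.2))
  have hd : ∀ ξ, d ξ = next (⨆ η : Iio ξ, s (d η)) := wellFounded_lt.fix_eq _
  refine ⟨d, fun ξ hξ => ?_⟩
  induction ξ using WellFoundedLT.induction with
  | _ ξ IH =>
    have hsup : ⨆ η : Iio ξ, s (d η) < κ.ord := hκ.iSup_Iio_lt hξ fun η =>
      hs _ (IH η η.2 (η.2.trans hξ)).1 (IH η η.2 (η.2.trans hξ)).2.1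
    rw [hd ξ]
    exact ⟨hnextX _ hsup, hnextκ _ hsup, fun η hη =>
      (Ordinal.le_iSup (fun η : Iio ξ => s (d η)) ⟨η, hη⟩).trans_lt (hnext _ hsup)⟩

theorem isStationaryOrd_setOf_cof_eq (hκ₀ : ℵ₀ < κ) {μ : Cardinal} (hμ : μ.IsRegular)
    (hμκ : μ < κ) : IsStationaryOrd {δ | δ.cof = μ} κ.ord := by
  intro D hD
  obtain ⟨d, hd⟩ := exists_seq_mem_forall_lt hκ
    (fun y hy => hD.exists_gt (Cardinal.isSuccLimit_ord hκ₀.le) hy) id fun _ _ hz => hz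
  have hμo : μ.ord < κ.ord := Cardinal.ord_lt_ord.2 hμκ
  let f : Iio μ.ord → Ordinal := fun i => d i
  have hf : StrictMono f := fun i j hij => (hd j (j.2.trans hμo)).2.2 i hij
  have hcof : (⨆ i, f i).cof = μ := by
    rw [Ordinal.cof_iSup_Iio hf (Cardinal.isSuccLimit_ord hμ.aleph0_le).isSuccPrelimit,
      hμ.cof_ord]
  have hlt : ⨆ i, f i < κ.ord := hκ.iSup_Iio_lt hμo fun i => (hd i (i.2.trans hμo)).2.1
  refine ⟨⨆ i, f i, hcof, hD.2.2 _ hlt ?_ fun y hy => ?_⟩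
  · rw [← Ordinal.cof_pos, hcof]
    exact Cardinal.aleph0_pos.trans_le hμ.aleph0_le
  · obtain ⟨i, hi⟩ := Ordinal.lt_iSup_iff.1 hy
    have hi' : Order.succ i.1 < μ.ord := (Cardinal.isSuccLimit_ord hμ.aleph0_le).succ_lt i.2
    exact ⟨f i, (hd i (i.2.trans hμo)).1, hi,
      (hf (Subtype.mk_lt_mk.2 (Order.lt_succ i.1) : i < ⟨_, hi'⟩)).trans_le (Ordinal.le_iSup f _)⟩

theorem exists_setLT_subfamily {A : Set (Set Ordinal)}
    (hA : ∀ a ∈ A, a.Nonempty ∧ a ⊆ Iio κ.ord ∧ #a < Cardinal.lift.{u + 1} κ) {X : Set Ordinal}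
    (hX : ∀ y < κ.ord, ∃ z ∈ X, y < z ∧ z < κ.ord) {b : Ordinal → Set Ordinal}
    (hbA : ∀ δ ∈ X, δ < κ.ord → b δ ∈ A) (hb : ∀ δ ∈ X, δ < κ.ord → ∀ x ∈ b δ, δ < x) :
    ∃ B ⊆ A, #B = Cardinal.lift.{u + 1} κ ∧ ∀ a ∈ B, ∀ a' ∈ B, SetLT a a' →
      ∃ δ ∈ X, ∃ δ' ∈ X, a = b δ ∧ a' = b δ' ∧ ∀ x ∈ a, x < δ' := by
  have htop : ∀ a ∈ A, sSup a < κ.ord := fun a ha => Ordinal.sSup_lt_of_mk_lt_cof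
    (by rw [hκ.cof_ord]; exact (hA a ha).2.2) (hA a ha).2.1
  have hbdd : ∀ a ∈ A, BddAbove a := fun a ha => ⟨κ.ord, fun x hx => ((hA a ha).2.1 hx).le⟩
  obtain ⟨d, hd⟩ := exists_seq_mem_forall_lt hκ hX (fun δ => sSup (b δ))
    fun δ hδ hδκ => htop _ (hbA δ hδ hδκ)
  have hdA : ∀ ξ < κ.ord, b (d ξ) ∈ A := fun ξ hξ => hbA _ (hd ξ hξ).1 (hd ξ hξ).2.1
  have hsep : ∀ ξ < κ.ord, ∀ η < ξ, ∀ x ∈ b (d η), x < d ξ := fun ξ hξ η hη x hx =>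
    (le_csSup (hbdd _ (hdA η (hη.trans hξ))) hx).trans_lt ((hd ξ hξ).2.2 η hη)
  have hinc : ∀ ξ < κ.ord, ∀ η < ξ, SetLT (b (d η)) (b (d ξ)) := fun ξ hξ η hη x hx y hy =>
    (hsep ξ hξ η hη x hx).trans (hb _ (hd ξ hξ).1 (hd ξ hξ).2.1 y hy)
  have hlt : ∀ η < κ.ord, ∀ ξ < κ.ord, SetLT (b (d η)) (b (d ξ)) → η < ξ := by
    intro η hη ξ hξ h
    refine lt_of_not_ge fun hξη => ?_
    obtain ⟨x, hx⟩ := (hA _ (hdA η hη)).1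
    rcases hξη.eq_or_lt with rfl | hξη
    · exact SetLT.not_self ⟨x, hx⟩ h
    · obtain ⟨y, hy⟩ := (hA _ (hdA ξ hξ)).1
      exact (h x hx y hy).not_gt (hinc η hη ξ hξη y hy x hx)
  have hinj : InjOn (fun ξ => b (d ξ)) (Iio κ.ord) := fun η hη ξ hξ (h : b (d η) = b (d ξ)) => by
    rcases lt_trichotomy η ξ with hηξ | rfl | hξη
    · exact (SetLT.not_self (hA _ (hdA ξ hξ)).1 (h ▸ hinc ξ hξ η hηξ)).elim
    · rfl
    · exact (SetLT.not_self (hA _ (hdA η hη)).1 (h ▸ hinc η hη ξ hξη)).elim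
  refine ⟨(fun ξ => b (d ξ)) '' Iio κ.ord, image_subset_iff.2 hdA, ?_, ?_⟩
  · rw [Cardinal.mk_image_eq_of_injOn _ _ hinj, Cardinal.mk_Iio_ordinal, Cardinal.card_ord]
  · rintro _ ⟨η, hη, rfl⟩ _ ⟨ξ, hξ, rfl⟩ h
    exact ⟨d η, (hd η hη).1, d ξ, (hd ξ hξ).1, rfl, rfl, hsep ξ hξ η (hlt η hη ξ hξ h)⟩

end Regular

section Successor

variable {lam : Cardinal.{u}} (hlam : ℵ₀ ≤ lam)

theorem exists_injOn_Iio_of_lt_ord_succ {δ : Ordinal} (hδ : δ < (Order.succ lam).ord) :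
    ∃ e : Ordinal → Ordinal, InjOn e (Iio δ) ∧ ∀ x < δ, e x < lam.ord := by
  classical
  obtain ⟨f⟩ : Nonempty (Iio δ ↪ Iio lam.ord) := by
    rw [← Cardinal.le_def, Cardinal.mk_Iio_ordinal, Cardinal.mk_Iio_ordinal, Cardinal.card_ord,
      Cardinal.lift_le]
    exact Ordinal.card_le_of_lt_ord_succ hδ
  refine ⟨fun x => if h : x < δ then f ⟨x, h⟩ else 0, fun x hx y hy hxy => ?_, fun x hx => ?_⟩
  · simp only [dif_pos (show x < δ from hx), dif_pos (show y < δ from hy)] at hxy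
    exact congrArg Subtype.val (f.injective (Subtype.ext hxy))
  · simp only [dif_pos hx]
    exact (f ⟨x, hx⟩).2

include hlam

theorem exists_injOn_fiber {θ : Cardinal} (hθ : θ ≤ Order.succ lam)
    (ζ : Ordinal → Ordinal) (hζ : ∀ ε < (Order.succ lam).ord, ζ ε < lam.ord) :
    ∃ ζ₀, ∃ f : Ordinal → Ordinal, InjOn f (Iio θ.ord) ∧
      ∀ j < θ.ord, f j < (Order.succ lam).ord ∧ ζ (f j) = ζ₀ := by
  classical
  have hκ₀ : ℵ₀ ≤ Order.succ lam := hlam.trans (Order.le_succ lam)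
  let g : Iio (Order.succ lam).ord → Iio lam.ord := fun ε => ⟨ζ ε, hζ ε ε.2⟩
  obtain ⟨ζ₀, hζ₀⟩ := Cardinal.infinite_pigeonhole_card g (Cardinal.lift.{u + 1} (Order.succ lam))
    (by rw [Cardinal.mk_Iio_ordinal, Cardinal.card_ord]) (Cardinal.aleph0_le_lift.2 hκ₀)
    (by rw [Cardinal.mk_Iio_ordinal, Cardinal.card_ord, ← Cardinal.lift_ord, ← Ordinal.lift_cof,
      (isRegular_succ hlam).cof_ord, Cardinal.lift_lt]; exact Order.lt_succ lam)
  obtain ⟨F⟩ : Nonempty (Iio θ.ord ↪ g ⁻¹' {ζ₀}) := by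
    rw [← Cardinal.le_def, Cardinal.mk_Iio_ordinal, Cardinal.card_ord]
    exact (Cardinal.lift_le.2 hθ).trans hζ₀
  refine ⟨ζ₀, fun j => if h : j < θ.ord then F ⟨j, h⟩ else 0, fun j hj j' hj' hjj' => ?_,
    fun j hj => ?_⟩
  · simp only [dif_pos (show j < θ.ord from hj), dif_pos (show j' < θ.ord from hj')] at hjj'
    exact congrArg Subtype.val (F.injective (Subtype.ext (Subtype.ext hjj')))
  · simp only [dif_pos hj]
    exact ⟨(F ⟨j, hj⟩).1.2, congrArg Subtype.val (F ⟨j, hj⟩).2⟩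

theorem IsStationaryOrd.exists_stationary_fibers {S : Set Ordinal}
    (hS : IsStationaryOrd S (Order.succ lam).ord) {θ : Cardinal} (hθ₀ : θ ≠ 0)
    (hθ : θ ≤ Order.succ lam) :
    ∃ L : Ordinal → Ordinal, (∀ δ, L δ < θ.ord) ∧
      ∀ j < θ.ord, IsStationaryOrd {δ ∈ S | L δ = j} (Order.succ lam).ord := by
  classical
  have hκ := isRegular_succ hlam
  have hκ₀ : ℵ₀ < Order.succ lam := hlam.trans_lt (Order.lt_succ lam)
  choose! e he_inj he_lt using fun δ (hδ : δ < (Order.succ lam).ord) =>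
    exists_injOn_Iio_of_lt_ord_succ hδ
  -- An Ulam matrix: `M ε ζ` and `M ε' ζ` are disjoint for `ε ≠ ε'` since `e δ` is injective.
  let M : Ordinal → Ordinal → Set Ordinal := fun ε ζ =>
    {δ ∈ S | ε < δ ∧ δ < (Order.succ lam).ord ∧ e δ ε = ζ}
  have hrow : ∀ ε < (Order.succ lam).ord, ∃ ζ < lam.ord,
      IsStationaryOrd (M ε ζ) (Order.succ lam).ord := fun ε hε =>
    (hS.inter_Ioi (Cardinal.isSuccLimit_ord hκ₀.le) hε).exists_isStationaryOrd_of_cover hκ hκ₀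
      (Order.lt_succ lam) fun δ ⟨hδS, hεδ⟩ hδ => ⟨e δ ε, he_lt δ hδ ε hεδ, hδS, hεδ, hδ, rfl⟩
  choose! ζ hζ hM using hrow
  obtain ⟨ζ₀, f, hf_inj, hf⟩ := exists_injOn_fiber hlam hθ ζ hζ
  have hdisj : ∀ j < θ.ord, ∀ j' < θ.ord, ∀ δ ∈ M (f j) ζ₀, δ ∈ M (f j') ζ₀ → j = j' :=
    fun j hj j' hj' δ ⟨_, h, hδ, he⟩ ⟨_, h', _, he'⟩ =>
      hf_inj hj hj' (he_inj δ hδ h h' (he.trans he'.symm))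
  let L : Ordinal → Ordinal := fun δ =>
    if h : ∃ j < θ.ord, δ ∈ M (f j) ζ₀ then h.choose else 0
  refine ⟨L, fun δ => ?_, fun j hj => ?_⟩
  · by_cases h : ∃ j < θ.ord, δ ∈ M (f j) ζ₀
    · simpa only [L, dif_pos h] using h.choose_spec.1
    · simpa only [L, dif_neg h] using Cardinal.ord_pos.2 (pos_iff_ne_zero.2 hθ₀)
  · refine ((hf j hj).2 ▸ hM (f j) (hf j hj).1).mono fun δ hδ => ⟨hδ.1, ?_⟩
    have h : ∃ j < θ.ord, δ ∈ M (f j) ζ₀ := ⟨j, hj, hδ⟩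
    simp only [L, dif_pos h]
    exact hdisj _ h.choose_spec.1 j hj δ h.choose_spec.2 hδ

end Successor

theorem Ordinal.exists_ladder (x : Ordinal) : ∃ C ⊆ Iio x, (∀ α < x, ∃ y ∈ C, α ≤ y) ∧
    ∀ δ < x, x.cof ≤ δ.cof → ∃ γ < δ, ∀ y ∈ C, y < δ → y ≤ γ := by
  obtain ⟨f, hf⟩ := Ordinal.exists_isFundamentalSeq (rfl : x.cof.ord = _)
  refine ⟨range fun i => (f i).1, ?_, fun α hα => ?_, fun δ hδ hcof => ?_⟩
  · rintro _ ⟨i, rfl⟩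
    exact (f i).2
  · obtain ⟨_, ⟨i, rfl⟩, hi⟩ := hf.isCofinal_range ⟨α, hα⟩
    exact ⟨_, ⟨i, rfl⟩, hi⟩
  · -- The ladder has order type `cf x`, so its points below `δ` are fewer than `cf δ`.
    obtain ⟨_, ⟨i, rfl⟩, hi⟩ := hf.isCofinal_range ⟨δ, hδ⟩
    obtain ⟨i₀, hi₀, hmin⟩ := wellFounded_lt.has_min {i | δ ≤ (f i).1} ⟨i, hi⟩
    have hlt : ∀ j, j < i₀ → (f j).1 < δ := fun j hj => not_le.1 fun h => hmin j h hj
    let g : Iio i₀.1 → Ordinal := fun j => (f ⟨j.1, mem_Iio.2 (lt_trans j.2 i₀.2)⟩).1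
    refine ⟨⨆ j, g j, Ordinal.iSup_Iio_lt_of_card_lt_cof
      ((Cardinal.lt_ord.1 i₀.2).trans_le hcof) fun j => hlt _ (Subtype.mk_lt_mk.2 j.2), ?_⟩
    rintro _ ⟨j, rfl⟩ hj
    have hji : j.1 < i₀.1 := lt_of_not_ge fun h =>
      (hi₀.trans (Subtype.coe_le_coe.2 (hf.strictMono.monotone (show i₀ ≤ j from h)))).not_gt hj
    exact Ordinal.le_iSup g ⟨j.1, hji⟩

def ladder (x : Ordinal) : Set Ordinal := (Ordinal.exists_ladder x).choose

theorem ladder_subset (x : Ordinal) : ladder x ⊆ Iio x :=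
  (Ordinal.exists_ladder x).choose_spec.1

theorem exists_mem_ladder_le {α x : Ordinal} (h : α < x) : ∃ y ∈ ladder x, α ≤ y :=
  (Ordinal.exists_ladder x).choose_spec.2.1 α h

theorem exists_forall_ladder_le {δ x : Ordinal} (hδ : δ < x) (hcof : x.cof ≤ δ.cof) :
    ∃ γ < δ, ∀ y ∈ ladder x, y < δ → y ≤ γ :=
  (Ordinal.exists_ladder x).choose_spec.2.2 δ hδ hcof

def walkStep (α x : Ordinal) : Ordinal := sInf (ladder x ∩ Ici α)

theorem walkStep_mem {α x : Ordinal} (h : α < x) : walkStep α x ∈ ladder x ∩ Ici α :=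
  csInf_mem (exists_mem_ladder_le h)

theorem le_walkStep {α x : Ordinal} (h : α < x) : α ≤ walkStep α x :=
  (walkStep_mem h).2

theorem walkStep_lt {α x : Ordinal} (h : α < x) : walkStep α x < x :=
  ladder_subset x (walkStep_mem h).1

theorem walkStep_eq_of_forall_ladder_le {α δ γ x : Ordinal}
    (hγ : ∀ y ∈ ladder x, y < δ → y ≤ γ) (hγα : γ < α) (hαδ : α ≤ δ) :
    walkStep α x = walkStep δ x := by
  suffices ladder x ∩ Ici α = ladder x ∩ Ici δ by rw [walkStep, walkStep, this]
  ext y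
  refine ⟨fun ⟨hy, hαy⟩ => ⟨hy, mem_Ici.2 (not_lt.1 fun hyδ => ?_)⟩,
    fun ⟨hy, hδy⟩ => ⟨hy, hαδ.trans hδy⟩⟩
  exact (hγ y hy hyδ).not_gt (hγα.trans_le hαy)

def walkTrace (α x : Ordinal) : Finset Ordinal :=
  if h : α < x then
    have := walkStep_lt h
    insert x (walkTrace α (walkStep α x))
  else ∅
termination_by x

theorem walkTrace_of_lt {α x : Ordinal} (h : α < x) :
    walkTrace α x = insert x (walkTrace α (walkStep α x)) := by
  rw [walkTrace, dif_pos h]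

theorem mem_walkTrace_self {α x : Ordinal} (h : α < x) : x ∈ walkTrace α x := by
  rw [walkTrace_of_lt h]
  exact Finset.mem_insert_self x _

theorem walkTrace_walkStep_subset {α x : Ordinal} (h : α < x) :
    walkTrace α (walkStep α x) ⊆ walkTrace α x := by
  rw [walkTrace_of_lt h]
  exact Finset.subset_insert x _

theorem exists_forall_mem_walkTrace {δ : Ordinal} (hδ : 0 < δ) {x : Ordinal} (hδx : δ ≤ x)
    (hcof : ∀ y ≤ x, y.cof ≤ δ.cof) : ∃ γ < δ, ∀ α ∈ Ioo γ δ, δ ∈ walkTrace α x := by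
  induction x using WellFoundedLT.induction with
  | _ x IH =>
    rcases hδx.eq_or_lt with rfl | hδx
    · exact ⟨0, hδ, fun α hα => mem_walkTrace_self hα.2⟩
    obtain ⟨γ₁, hγ₁, hladder⟩ := exists_forall_ladder_le hδx (hcof x le_rfl)
    have hstep := walkStep_lt hδx
    obtain ⟨γ₂, hγ₂, hIH⟩ :=
      IH _ hstep (le_walkStep hδx) fun y hy => hcof y (hy.trans hstep.le)
    refine ⟨max γ₁ γ₂, max_lt hγ₁ hγ₂, fun α ⟨hγα, hαδ⟩ => ?_⟩
    -- Above `γ₁` the ladder of `x` has no points in `[α, δ)`, so the walks towards `α` and `δ`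
    -- take the same first step.
    have hα := hIH α ⟨(le_max_right γ₁ γ₂).trans_lt hγα, hαδ⟩
    rw [← walkStep_eq_of_forall_ladder_le hladder ((le_max_left γ₁ γ₂).trans_lt hγα) hαδ.le]
      at hα
    exact walkTrace_walkStep_subset (hαδ.trans hδx) hα

theorem exists_forall_mem_walkTrace_of_mk_lt {δ : Ordinal.{u}} (hδ : 0 < δ) {s : Set Ordinal}
    (hs : #s < Cardinal.lift.{u + 1} δ.cof) (hsδ : ∀ β ∈ s, δ ≤ β ∧ ∀ y ≤ β, y.cof ≤ δ.cof) :
    ∃ γ < δ, ∀ β ∈ s, ∀ α ∈ Ioo γ δ, δ ∈ walkTrace α β := by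
  choose! g hg hgδ using fun β hβ => exists_forall_mem_walkTrace hδ (hsδ β hβ).1 (hsδ β hβ).2
  have hbdd : BddAbove (g '' s) := ⟨δ, forall_mem_image.2 fun β hβ => (hg β hβ).le⟩
  refine ⟨sSup (g '' s), Ordinal.sSup_lt_of_mk_lt_cof (mk_image_le.trans_lt hs)
    (forall_mem_image.2 hg), fun β hβ α hα => hgδ β hβ α ⟨?_, hα.2⟩⟩
  exact (le_csSup hbdd (mem_image_of_mem g hβ)).trans_lt hα.1

theorem exists_forall_mem_walkTrace_of_cof_eq {lam : Cardinal.{u}} (hlam : ℵ₀ ≤ lam)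
    {δ : Ordinal} (hδ : δ.cof = lam) {s : Set Ordinal} (hs : #s < Cardinal.lift.{u + 1} lam)
    (hsδ : ∀ β ∈ s, δ ≤ β ∧ β < (Order.succ lam).ord) :
    ∃ γ < δ, ∀ β ∈ s, ∀ α ∈ Ioo γ δ, δ ∈ walkTrace α β := by
  refine exists_forall_mem_walkTrace_of_mk_lt
    (Ordinal.cof_pos.1 (hδ ▸ Cardinal.aleph0_pos.trans_le hlam)) (hδ ▸ hs) fun β hβ =>
      ⟨(hsδ β hβ).1, fun y hy => (Ordinal.cof_le_card y).trans ?_⟩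
  exact hδ ▸ Ordinal.card_le_of_lt_ord_succ (hy.trans_lt (hsδ β hβ).2)

def walkColoring (L : Ordinal → Ordinal) (α β : Ordinal) : Ordinal := (walkTrace α β).sup L

theorem walkColoring_lt {L : Ordinal → Ordinal} {o : Ordinal} (ho : 0 < o) (hL : ∀ δ, L δ < o)
    (α β : Ordinal) : walkColoring L α β < o :=
  (Finset.sup_lt_iff ho).2 fun δ _ => hL δ

theorem le_walkColoring (L : Ordinal → Ordinal) {α β δ : Ordinal} (h : δ ∈ walkTrace α β) :
    L δ ≤ walkColoring L α β :=
  Finset.le_sup h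

theorem exists_subfamily_forall_mem_walkTrace {lam : Cardinal} (hlam : ℵ₀ ≤ lam) {χ' : Cardinal}
    (hχ' : χ' < lam) {A : Set (Set Ordinal)} (hA : IsDisjFamily (Order.succ lam) χ' A)
    {T : Set Ordinal} (hT : IsStationaryOrd T (Order.succ lam).ord)
    (hTcof : ∀ δ ∈ T, δ.cof = lam) :
    ∃ B ⊆ A, HasCard B (Order.succ lam) ∧ ∀ a ∈ B, ∀ b ∈ B, SetLT a b →
      ∀ α ∈ a, ∀ β ∈ b, ∃ δ ∈ T, δ ∈ walkTrace α β := by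
  have hκ := isRegular_succ hlam
  have hκ₀ : ℵ₀ < Order.succ lam := hlam.trans_lt (Order.lt_succ lam)
  have hsmall : ∀ a ∈ A, #a < Cardinal.lift lam := fun a ha => by
    rw [(hA.1 a ha).2, Cardinal.lift_lt]
    exact hχ'
  have hIic : ∀ δ < (Order.succ lam).ord, #(Iic δ) < #A := fun δ hδ => by
    rw [← Order.Iio_succ, Cardinal.mk_Iio_ordinal, hA.2.2, Cardinal.lift_lt]
    exact Cardinal.lt_ord.1 ((Cardinal.isSuccLimit_ord hκ₀.le).succ_lt hδ)
  choose! b hbA hb using fun δ hδ => exists_mem_forall_lt_of_pairwiseDisjoint hA.2.1 (hIic δ hδ)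
  choose! F hF hFtrace using fun δ (hδ : δ ∈ T) (hδκ : δ < (Order.succ lam).ord) =>
    exists_forall_mem_walkTrace_of_cof_eq hlam (hTcof δ hδ) (hsmall _ (hbA δ hδκ)) fun β hβ =>
      ⟨(hb δ hδκ β hβ).le, (hA.1 _ (hbA δ hδκ)).1 hβ⟩
  obtain ⟨ε, hε, hεT⟩ := hT.exists_le_of_regressive hκ hκ₀ hF
  let X := {δ | δ ∈ T ∧ δ < (Order.succ lam).ord ∧ ε < δ ∧ F δ ≤ ε}
  have hX : ∀ y < (Order.succ lam).ord, ∃ δ ∈ X, y < δ ∧ δ < (Order.succ lam).ord := by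
    intro y hy
    obtain ⟨δ, hδT, hδ, hδκ, hFδ⟩ := hεT _ (max_lt hy hε)
    exact ⟨δ, ⟨hδT, hδκ, (le_max_right y ε).trans_lt hδ, hFδ⟩, (le_max_left y ε).trans_lt hδ, hδκ⟩
  obtain ⟨B, hBA, hBcard, hB⟩ := exists_setLT_subfamily hκ
    (fun a ha => ⟨hA.nonempty_of_mem (Cardinal.one_lt_aleph0.trans hκ₀) ha, (hA.1 a ha).1,
      (hsmall a ha).trans (Cardinal.lift_lt.2 (Order.lt_succ lam))⟩)
    hX (fun δ hδ _ => hbA δ hδ.2.1) (fun δ hδ _ => hb δ hδ.2.1)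
  refine ⟨B, hBA, hBcard, fun a ha a' ha' h α hα β hβ => ?_⟩
  obtain ⟨δ, ⟨-, hδκ, hεδ, -⟩, δ', ⟨hδ'T, hδ'κ, -, hFδ'⟩, rfl, rfl, hsep⟩ := hB a ha a' ha' h
  exact ⟨δ', hδ'T, hFtrace δ' hδ'T hδ'κ β hβ α
    ⟨hFδ'.trans_lt (hεδ.trans (hb δ hδκ α hα)), hsep α hα⟩⟩

theorem stmt16 (lam θ : Cardinal)
    (hlam : lam.IsRegular) (hθreg : θ.IsRegular) (hθlam : θ ≤ lam) :
    U (Order.succ lam) (Order.succ lam) θ lam := by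
  have hl := hlam.aleph0_le
  have hθ₀ : ℵ₀ ≤ θ := hθreg.aleph0_le
  obtain ⟨L, hL, hLstat⟩ := (isStationaryOrd_setOf_cof_eq (isRegular_succ hl)
    (hl.trans_lt (Order.lt_succ lam)) hlam (Order.lt_succ lam)).exists_stationary_fibers hl
    (Cardinal.aleph0_pos.trans_le hθ₀).ne' (hθlam.trans (Order.le_succ lam))
  refine ⟨walkColoring L, fun α β _ _ =>
    walkColoring_lt (Cardinal.ord_pos.2 (Cardinal.aleph0_pos.trans_le hθ₀)) hL α β, ?_⟩
  intro χ' hχ' A hA i hi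
  obtain ⟨B, hBA, hB, hBtrace⟩ := exists_subfamily_forall_mem_walkTrace hl hχ' hA
    (hLstat _ ((Cardinal.isSuccLimit_ord hθ₀).succ_lt hi)) fun δ hδ => hδ.1
  refine ⟨B, hBA, hB, fun a ha b hb hab α hα β hβ => ?_⟩
  obtain ⟨δ, ⟨-, hLδ⟩, hδ⟩ := hBtrace a ha b hb hab α hα β hβ
  exact (Order.lt_succ i).trans_le (hLδ ▸ le_walkColoring L hδ)
end
end

section
/- Suppose that λ is a singular cardinal. Then there exists a closed witness to U(λ⁺, λ⁺, cf(λ), λ). -/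
open Cardinal Set Ordinal

noncomputable section

/-- `D` is a club in (the ordinal) `o`: a closed and unbounded subset of `o`. -/
def IsClubIn (D : Set Ordinal) (o : Ordinal) : Prop :=
  D ⊆ Set.Iio o ∧ (∀ α < o, ∃ β ∈ D, α ≤ β) ∧
    ∀ γ < o, 0 < γ → (∀ x < γ, ∃ β ∈ D, x < β ∧ β < γ) → γ ∈ D

/-- `S` is stationary in `o`: it meets every club in `o`. -/
def IsStationaryIn (S : Set Ordinal) (o : Ordinal) : Prop :=
  ∀ D, IsClubIn D o → (S ∩ D).Nonempty

/-- A `C`-sequence over `κ`. -/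
def IsCSeq (κ : Cardinal) (C : Ordinal → Set Ordinal) : Prop :=
  C 0 = ∅ ∧ (∀ α, C (α + 1) = {α}) ∧
    ∀ α < κ.ord, Order.IsSuccLimit α → IsClubIn (C α) α

/-- The walk `Tr(α,β)` from `β` down to `α` along the `C`-sequence `C`. -/
def walk (C : Ordinal → Set Ordinal) (α β : Ordinal) : ℕ → Ordinal
  | 0 => β
  | n + 1 =>
      if α < walk C α β n then sInf {γ ∈ C (walk C α β n) | α ≤ γ} else α

/-- `ρ₂(α,β)`: the number of steps of the walk from `β` down to `α`. -/
def rho2 (C : Ordinal → Set Ordinal) (α β : Ordinal) : ℕ :=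
  sInf {n : ℕ | walk C α β n = α}

/-- `λ₂(α,β) = sup (α ∩ {sup (C_δ ∩ α) : δ ∈ im (tr (α,β))})`. -/
def lambda2 (C : Ordinal → Set Ordinal) (α β : Ordinal) : Ordinal :=
  sSup {x : Ordinal | x < α ∧
    ∃ n < rho2 C α β, x = sSup (C (walk C α β n) ∩ Set.Iio α)}

/-- The set of accumulation points of `s` that belong to `s`. -/
def accSet (s : Set Ordinal) : Set Ordinal :=
  {δ ∈ s | 0 < δ ∧ ∀ x < δ, ∃ y ∈ s, x < y ∧ y < δ}

/-- `c` is a closed coloring: for all `β < κ` and `i ≤ θ`, the set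
`{α < β : c α β ≤ i}` contains all of its accumulation points below `β`. -/
def ClosedColoring (κ θ : Cardinal) (c : Ordinal → Ordinal → Ordinal) : Prop :=
  ∀ β < κ.ord, ∀ i ≤ θ.ord, ∀ γ < β, 0 < γ →
    (∀ x < γ, ∃ α, x < α ∧ α < γ ∧ c α β ≤ i) → c γ β ≤ i

/-!
Fix a fundamental sequence `(λ_i)_{i < cf λ}` of `λ` and, for each `β < λ⁺`, an injection
`e_β : β → λ`. Level `i` of `β` is the closure of `e_β⁻¹[λ_i + 1]`; it has size `< λ`
uniformly in `β`, and the colour of `α < β` is the first level of `β` containing `α`. The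
colouring is closed because the levels are.

For `U`, take `λ⁺` disjoint blocks of size `χ < λ` and a colour `i`. The `i`-th levels of the
points of a block `b` form a set of size `ν < λ`, so they meet at most `ν` earlier blocks. A
closure point `ξ` of cofinality `ν⁺` (built by a chain of length `ν⁺`, in place of Fodor's lemma)
shows that for some bound `β`, `λ⁺` blocks start above `β` while all the earlier blocks they
meet start below `β`; no two of these blocks then have colour `≤ i` between them.
-/

universe u

theorem mk_Iio_lt_of_lt_ord {κ : Cardinal.{u}} {o : Ordinal.{u}} (ho : o < κ.ord) :
    #(Iio o) < lift.{u + 1} κ := by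
  rw [Cardinal.mk_Iio_ordinal, Cardinal.lift_lt]
  exact Cardinal.lt_ord.1 ho

theorem mk_Iic_lt_of_lt_ord {κ : Cardinal.{u}} (hκ : ℵ₀ ≤ κ) {o : Ordinal.{u}} (ho : o < κ.ord) :
    #(Iic o) < lift.{u + 1} κ := by
  rw [← Iio_insert, mk_insert self_notMem_Iio]
  exact add_one_lt_of_lt (by simpa using hκ) (mk_Iio_lt_of_lt_ord ho)

theorem sSup_lt_ord_of_isRegular {κ : Cardinal.{u}} (hκ : κ.IsRegular) {s : Set Ordinal.{u}}
    (hs : s ⊆ Iio κ.ord) (hsκ : #s < lift.{u + 1} κ) : sSup s < κ.ord :=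
  sSup_lt_of_lt_cof (by rwa [← lift_cof, hκ.cof_ord]) hs

def supChain (h : Ordinal.{u} → Ordinal.{u}) (σ : Ordinal.{u}) : Ordinal.{u} :=
  ⨆ ρ : Iio σ, h (supChain h ρ)
termination_by σ
decreasing_by exact ρ.2

theorem supChain_eq (h : Ordinal.{u} → Ordinal.{u}) (σ : Ordinal.{u}) :
    supChain h σ = ⨆ ρ : Iio σ, h (supChain h ρ) := by
  rw [supChain]

theorem apply_supChain_le (h : Ordinal.{u} → Ordinal.{u}) {ρ σ : Ordinal.{u}} (hρσ : ρ < σ) :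
    h (supChain h ρ) ≤ supChain h σ := by
  rw [supChain_eq h σ]
  exact Ordinal.le_iSup (fun ρ : Iio σ ↦ h (supChain h ρ)) ⟨ρ, hρσ⟩

theorem supChain_lt_ord {κ : Cardinal.{u}} (hκ : κ.IsRegular) {h : Ordinal.{u} → Ordinal.{u}}
    (hh : ∀ x < κ.ord, h x < κ.ord) {σ : Ordinal.{u}} (hσ : σ < κ.ord) : supChain h σ < κ.ord := by
  induction σ using WellFoundedLT.induction with
  | _ σ ih =>
    rw [supChain_eq h σ]
    apply lift_iSup_lt_of_lt_cof
    · rw [← lift_cof, hκ.cof_ord, Cardinal.lift_id'.{u, u + 1}]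
      exact mk_Iio_lt_of_lt_ord hσ
    · exact fun ρ ↦ hh _ (ih ρ ρ.2 (ρ.2.trans hσ))

theorem exists_closurePoint {κ μ : Cardinal.{u}} (hκ : κ.IsRegular) (hμ : μ.IsRegular)
    (hμκ : μ < κ) {g : Ordinal.{u} → Ordinal.{u}} (hg : ∀ β < κ.ord, g β < κ.ord) :
    ∃ ξ < κ.ord, ξ.cof = μ ∧ ∀ β < ξ, g β < ξ := by
  set h : Ordinal.{u} → Ordinal.{u} := fun x ↦ ⨆ β : Iic x, (max (g β) β + 1)
  have lt_h {β x : Ordinal.{u}} (hβx : β ≤ x) : max (g β) β < h x :=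
    (lt_add_one _).trans_le (Ordinal.le_iSup (fun β : Iic x ↦ max (g β) β + 1) ⟨β, hβx⟩)
  have h_lt (x : Ordinal.{u}) (hx : x < κ.ord) : h x < κ.ord := by
    apply lift_iSup_add_one_lt_of_lt_cof
    · rw [← lift_cof, hκ.cof_ord, Cardinal.lift_id'.{u, u + 1}]
      exact mk_Iic_lt_of_lt_ord hκ.aleph0_le hx
    · exact fun β ↦ max_lt (hg _ (β.2.trans_lt hx)) (β.2.trans_lt hx)
  have hmono : StrictMono (h ∘ supChain h) := fun ρ σ hρσ ↦
    (apply_supChain_le h hρσ).trans_lt ((le_max_right _ _).trans_lt (lt_h le_rfl))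
  have hL : Order.IsSuccLimit μ.ord := isSuccLimit_ord hμ.aleph0_le
  refine ⟨supChain h μ.ord, supChain_lt_ord hκ h_lt (ord_lt_ord.2 hμκ), ?_, fun β hβ ↦ ?_⟩
  · rw [supChain_eq]
    exact (cof_iSup_Iio (hmono.comp (Subtype.strictMono_coe _)) hL.isSuccPrelimit).trans hμ.cof_ord
  · rw [supChain_eq, Ordinal.lt_iSup_iff] at hβ
    obtain ⟨ρ, hρ⟩ := hβ
    calc g β ≤ max (g β) β := le_max_left _ _
      _ < h (supChain h (ρ + 1)) := lt_h (hρ.le.trans (apply_supChain_le h (lt_add_one _)))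
      _ ≤ supChain h μ.ord := apply_supChain_le h (hL.add_one_lt ρ.2)

theorem exists_mk_setOf_subset_Iic_eq {κ μ : Cardinal.{u}} (hκ : κ.IsRegular)
    (hμ : μ.IsRegular) (hμκ : μ < κ) {M : Set Ordinal.{u}} (hM : M ⊆ Iio κ.ord)
    (hMκ : #M = lift.{u + 1} κ) {F : Ordinal.{u} → Set Ordinal.{u}}
    (hFM : ∀ η ∈ M, F η ⊆ M ∩ Iio η) (hFμ : ∀ η ∈ M, #(F η) < lift.{u + 1} μ) :
    ∃ β, #{η ∈ M | β < η ∧ F η ⊆ Iic β} = lift.{u + 1} κ := by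
  by_contra! hY
  set Y := fun β ↦ {η ∈ M | β < η ∧ F η ⊆ Iic β}
  have hYbdd (β : Ordinal.{u}) : BddAbove (Y β) := ⟨κ.ord, fun η hη ↦ (hM hη.1).le⟩
  have hYκ (β : Ordinal.{u}) : #(Y β) < lift.{u + 1} κ :=
    ((mk_le_mk_of_subset fun η hη ↦ hη.1).trans_eq hMκ).lt_of_ne (hY β)
  obtain ⟨ξ, hξκ, hξμ, hξ⟩ := exists_closurePoint hκ hμ hμκ (g := fun β ↦ sSup (Y β))
    fun β _ ↦ sSup_lt_ord_of_isRegular hκ (fun η hη ↦ hM hη.1) (hYκ β)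
  have hMξ : (M \ Iio ξ).Nonempty := by
    rw [nonempty_iff_ne_empty, Ne, sdiff_eq_empty]
    exact fun h ↦ ((mk_le_mk_of_subset h).trans_lt (mk_Iio_lt_of_lt_ord hξκ)).ne hMκ
  -- the least element of `M` above `ξ` only sees elements of `M` below `ξ`
  obtain ⟨hηM, hξη⟩ := csInf_mem hMξ
  set η := sInf (M \ Iio ξ)
  have hFξ : F η ⊆ Iio ξ := fun ζ hζ ↦ by_contra fun h ↦
    (csInf_le' (show ζ ∈ M \ Iio ξ from ⟨(hFM η hηM hζ).1, h⟩)).not_gt (hFM η hηM hζ).2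
  have hr : sSup (F η) < ξ :=
    sSup_lt_of_lt_cof (by rw [← lift_cof, hξμ]; exact hFμ η hηM) hFξ
  have hηY : η ∈ Y (sSup (F η)) :=
    ⟨hηM, hr.trans_le (not_lt.1 hξη), fun ζ hζ ↦ le_csSup ⟨ξ, fun x hx ↦ (hFξ hx).le⟩ hζ⟩
  exact hξη ((le_csSup (hYbdd _) hηY).trans_lt (hξ _ hr))

theorem Set.PairwiseDisjoint.mk_setOf_inter_nonempty_le {α : Type*} {A : Set (Set α)}
    (hA : A.PairwiseDisjoint id) (t : Set α) : #{a ∈ A | (a ∩ t).Nonempty} ≤ #t := by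
  refine mk_le_of_injective (f := fun a ↦ ⟨a.2.2.some, a.2.2.some_mem.2⟩) fun a b hab ↦ ?_
  have hab' : a.2.2.some = b.2.2.some := congrArg Subtype.val hab
  have hb : a.2.2.some ∈ b.1 := hab' ▸ b.2.2.some_mem.1
  exact Subtype.ext <| hA.elim a.2.1 b.2.1 <| not_disjoint_iff.2 ⟨_, a.2.2.some_mem.1, hb⟩

theorem exists_free_subfamily {κ μ : Cardinal.{u}} (hκ : κ.IsRegular) (hμ : μ.IsRegular)
    (hμκ : μ < κ) {A : Set (Set Ordinal.{u})} (hA : ∀ a ∈ A, a.Nonempty ∧ a ⊆ Iio κ.ord)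
    (hdisj : A.PairwiseDisjoint id) (hAκ : #A = lift.{u + 1} κ)
    {T : Set Ordinal.{u} → Set Ordinal.{u}} (hT : ∀ a ∈ A, #(T a) < lift.{u + 1} μ) :
    ∃ B ⊆ A, #B = lift.{u + 1} κ ∧ ∀ a ∈ B, ∀ b ∈ B, sInf a < sInf b → Disjoint a (T b) := by
  have hinj : InjOn sInf A := fun a ha b hb hab ↦ hdisj.elim ha hb <|
    not_disjoint_iff.2 ⟨sInf a, csInf_mem (hA a ha).1, hab ▸ csInf_mem (hA b hb).1⟩
  have hbl : ∀ a ∈ A, Function.invFunOn sInf A (sInf a) = a := hinj.leftInvOn_invFunOn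
  set F : Ordinal.{u} → Set Ordinal.{u} := fun η ↦
    sInf '' {a ∈ A | sInf a < η ∧ (a ∩ T (Function.invFunOn sInf A η)).Nonempty}
  have hFM (η : Ordinal.{u}) (_ : η ∈ sInf '' A) : F η ⊆ sInf '' A ∩ Iio η := by
    rintro _ ⟨a, ha, rfl⟩
    exact ⟨mem_image_of_mem _ ha.1, ha.2.1⟩
  have hFμ : ∀ η ∈ sInf '' A, #(F η) < lift.{u + 1} μ := by
    rintro _ ⟨b, hb, rfl⟩
    refine mk_image_le.trans_lt <| ((mk_le_mk_of_subset ?_).trans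
      (hdisj.mk_setOf_inter_nonempty_le (T b))).trans_lt (hT b hb)
    intro a ha
    rw [hbl b hb] at ha
    exact ⟨ha.1, ha.2.2⟩
  obtain ⟨β, hβ⟩ := exists_mk_setOf_subset_Iic_eq hκ hμ hμκ
    (by rintro _ ⟨a, ha, rfl⟩; exact (hA a ha).2 (csInf_mem (hA a ha).1))
    (by rwa [mk_image_eq_of_injOn _ _ hinj]) hFM hFμ
  refine ⟨{a ∈ A | β < sInf a ∧ F (sInf a) ⊆ Iic β}, fun a ha ↦ ha.1, ?_, ?_⟩
  · rw [← mk_image_eq_of_injOn _ _ (hinj.mono fun a ha ↦ ha.1), ← hβ]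
    congr 2
    ext η
    constructor
    · rintro ⟨a, ⟨ha, hβa, hFa⟩, rfl⟩
      exact ⟨mem_image_of_mem _ ha, hβa, hFa⟩
    · rintro ⟨⟨a, ha, rfl⟩, hβa, hFa⟩
      exact ⟨a, ⟨ha, hβa, hFa⟩, rfl⟩
  · rintro a ⟨ha, hβa, -⟩ b ⟨hb, -, hFb⟩ hab
    rw [Set.disjoint_left]
    intro x hxa hxT
    have : sInf a ∈ F (sInf b) := ⟨a, ⟨ha, hab, x, hxa, by rwa [hbl b hb]⟩, rfl⟩
    exact (hFb this).not_gt hβa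

def accClosure (s : Set Ordinal.{u}) : Set Ordinal.{u} :=
  s ∪ {δ | 0 < δ ∧ ∀ x < δ, ∃ y ∈ s, x < y ∧ y < δ}

theorem subset_accClosure (s : Set Ordinal.{u}) : s ⊆ accClosure s := subset_union_left

theorem accClosure_mono {s t : Set Ordinal.{u}} (hst : s ⊆ t) : accClosure s ⊆ accClosure t := by
  rintro δ (hδ | ⟨hδ0, hδ⟩)
  · exact Or.inl (hst hδ)
  · refine Or.inr ⟨hδ0, fun x hx ↦ ?_⟩
    obtain ⟨y, hy, hxy, hyδ⟩ := hδ x hx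
    exact ⟨y, hst hy, hxy, hyδ⟩

theorem mem_accClosure_of_forall_exists {s : Set Ordinal.{u}} {γ : Ordinal.{u}} (hγ : 0 < γ)
    (h : ∀ x < γ, ∃ α ∈ accClosure s, x < α ∧ α < γ) : γ ∈ accClosure s := by
  refine Or.inr ⟨hγ, fun x hx ↦ ?_⟩
  obtain ⟨α, hα | ⟨-, hα⟩, hxα, hαγ⟩ := h x hx
  · exact ⟨α, hα, hxα, hαγ⟩
  · obtain ⟨y, hy, hxy, hyα⟩ := hα x hxα
    exact ⟨y, hy, hxy, hyα.trans hαγ⟩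

theorem mk_accClosure_le {s : Set Ordinal.{u}} {c : Cardinal.{u + 1}} (hc : ℵ₀ ≤ c)
    (hs : #s ≤ c) : #(accClosure s) ≤ c := by
  set P := {δ | 0 < δ ∧ ∀ x < δ, ∃ y ∈ s, x < y ∧ y < δ}
  -- a limit point is determined by the next element of `s` (or by there being none)
  set f : Ordinal.{u} → Ordinal.{u} := fun δ ↦ sInf {y ∈ s | δ ≤ y}
  have hf {δ₁ δ₂ : Ordinal.{u}} (h₁ : δ₁ ∈ P) (h₂ : δ₂ ∈ P) (hlt : δ₁ < δ₂) : f δ₁ ≠ f δ₂ := by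
    obtain ⟨y, hy, hδ₁y, hyδ₂⟩ := h₂.2 δ₁ hlt
    have hy₁ : y ∈ {y ∈ s | δ₁ ≤ y} := ⟨hy, hδ₁y.le⟩
    have hf₁ : f δ₁ < δ₂ := (csInf_le' hy₁).trans_lt hyδ₂
    intro heq
    rcases eq_empty_or_nonempty {y ∈ s | δ₂ ≤ y} with h | h
    · have : f δ₂ = 0 := by simp only [f, h, Ordinal.sInf_empty]
      exact (h₁.1.trans_le (csInf_mem ⟨y, hy₁⟩).2).ne' (heq.trans this)
    · exact hf₁.not_ge (heq ▸ (csInf_mem h).2)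
  have hinj : InjOn f P := fun δ₁ h₁ δ₂ h₂ heq ↦ by
    rcases lt_trichotomy δ₁ δ₂ with hlt | rfl | hlt
    exacts [absurd heq (hf h₁ h₂ hlt), rfl, absurd heq.symm (hf h₂ h₁ hlt)]
  have hmaps : MapsTo f P (insert 0 s) := fun δ _ ↦ by
    rcases eq_empty_or_nonempty {y ∈ s | δ ≤ y} with h | h
    · left; simp only [f, h, Ordinal.sInf_empty]
    · exact Or.inr (csInf_mem h).1
  have hP : #P ≤ c := by
    rw [← mk_image_eq_of_injOn _ _ hinj]
    exact (mk_le_mk_of_subset hmaps.image_subset).trans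
      (mk_insert_le.trans (add_le_of_le hc hs (one_le_aleph0.trans hc)))
  exact (mk_union_le _ _).trans (add_le_of_le hc hs hP)

structure IsClosedLevels (κ lam θ : Cardinal.{u})
    (D : Ordinal.{u} → Ordinal.{u} → Set Ordinal.{u}) : Prop where
  mono : ∀ β < κ.ord, ∀ ⦃i j : Ordinal.{u}⦄, i ≤ j → j < θ.ord → D i β ⊆ D j β
  exists_mem : ∀ β < κ.ord, ∀ α < β, ∃ i < θ.ord, α ∈ D i β
  closed : ∀ β < κ.ord, ∀ i < θ.ord, ∀ γ < β, 0 < γ →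
    (∀ x < γ, ∃ α ∈ D i β, x < α ∧ α < γ) → γ ∈ D i β
  small : ∀ i < θ.ord, ∃ μ < lam, ∀ β < κ.ord, #(D i β) ≤ lift.{u + 1} μ

def levelColoring (θ : Cardinal.{u}) (D : Ordinal.{u} → Ordinal.{u} → Set Ordinal.{u})
    (α β : Ordinal.{u}) : Ordinal.{u} :=
  sInf {i | i < θ.ord ∧ α ∈ D i β}

namespace IsClosedLevels

variable {κ lam θ : Cardinal.{u}} {D : Ordinal.{u} → Ordinal.{u} → Set Ordinal.{u}}
  {α β : Ordinal.{u}}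

theorem levelColoring_spec (hD : IsClosedLevels κ lam θ D) (hβ : β < κ.ord) (hαβ : α < β) :
    levelColoring θ D α β < θ.ord ∧ α ∈ D (levelColoring θ D α β) β :=
  csInf_mem (hD.exists_mem β hβ α hαβ)

theorem levelColoring_le_iff (hD : IsClosedLevels κ lam θ D) (hβ : β < κ.ord) (hαβ : α < β)
    {i : Ordinal.{u}} (hi : i < θ.ord) : levelColoring θ D α β ≤ i ↔ α ∈ D i β :=
  ⟨fun h ↦ hD.mono β hβ h hi (hD.levelColoring_spec hβ hαβ).2,
    fun h ↦ csInf_le' (show i ∈ {i | i < θ.ord ∧ α ∈ D i β} from ⟨hi, h⟩)⟩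

theorem isColoring (hD : IsClosedLevels κ lam θ D) : IsColoring κ θ (levelColoring θ D) :=
  fun _ _ hαβ hβ ↦ (hD.levelColoring_spec hβ hαβ).1

theorem closedColoring (hD : IsClosedLevels κ lam θ D) :
    ClosedColoring κ θ (levelColoring θ D) := by
  intro β hβ i hi γ hγβ hγ hacc
  rcases hi.lt_or_eq with hi | rfl
  · rw [hD.levelColoring_le_iff hβ hγβ hi]
    refine hD.closed β hβ i hi γ hγβ hγ fun x hx ↦ ?_
    obtain ⟨α, hxα, hαγ, hα⟩ := hacc x hx
    exact ⟨α, (hD.levelColoring_le_iff hβ (hαγ.trans hγβ) hi).1 hα, hxα, hαγ⟩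
  · exact (hD.levelColoring_spec hβ hγβ).1.le

end IsClosedLevels

theorem IsDisjFamily.nonempty {κ χ : Cardinal.{0}} {A : Set (Set Ordinal.{0})}
    (hA : IsDisjFamily κ χ A) (hκ : ℵ₀ ≤ κ) {a : Set Ordinal.{0}} (ha : a ∈ A) : a.Nonempty := by
  obtain ⟨hAsub, -, hAκ⟩ := hA
  rcases eq_or_ne χ 0 with rfl | hχ
  · have hA : A ⊆ {∅} := fun b hb ↦ by
      simpa [HasCard, mk_eq_zero_iff] using (hAsub b hb).2
    have := (mk_le_mk_of_subset hA).trans_eq (mk_singleton _)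
    rw [HasCard] at hAκ
    rw [hAκ, lift_le_one_iff] at this
    exact absurd (hκ.trans this) (not_le.2 one_lt_aleph0)
  · rw [← nonempty_coe_sort, ← mk_ne_zero_iff, (hAsub a ha).2]
    simpa using hχ

theorem IsClosedLevels.witnessU {κ lam θ : Cardinal.{0}}
    {D : Ordinal.{0} → Ordinal.{0} → Set Ordinal.{0}} (hD : IsClosedLevels κ lam θ D)
    (hκ : κ.IsRegular) (hlam : ℵ₀ < lam) (hlamκ : lam < κ) :
    WitnessU κ κ θ lam (levelColoring θ D) := by
  refine ⟨hD.isColoring, fun χ hχ A hA i hi ↦ ?_⟩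
  obtain ⟨μ, hμ, hDμ⟩ := hD.small i hi
  set ν := χ * μ + ℵ₀
  have hνlam : ν < lam := add_lt_of_lt hlam.le (mul_lt_of_lt hlam.le hχ hμ) hlam
  have hT : ∀ b ∈ A, #(⋃ β ∈ b, D i β) < lift.{1} (Order.succ ν) := by
    intro b hb
    calc #(⋃ β ∈ b, D i β) ≤ #b * ⨆ β : b, #(D i β) := mk_biUnion_le _ _
      _ ≤ lift χ * lift μ :=
        mul_le_mul' (hA.1 b hb).2.le (ciSup_le' fun β ↦ hDμ β ((hA.1 b hb).1 β.2))
      _ < lift (Order.succ ν) := by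
        rw [← Cardinal.lift_mul, Cardinal.lift_lt]
        exact (self_le_add_right _ _).trans_lt (Order.lt_succ ν)
  obtain ⟨B, hBA, hBκ, hB⟩ := exists_free_subfamily hκ (isRegular_succ le_add_self)
    ((Order.succ_le_of_lt hνlam).trans_lt hlamκ)
    (fun a ha ↦ ⟨hA.nonempty hκ.aleph0_le ha, (hA.1 a ha).1⟩) hA.2.1 hA.2.2 hT
  refine ⟨B, hBA, hBκ, fun a ha b hb hab α hα β hβ ↦ ?_⟩
  have hαβ : α < β := hab α hα β hβ
  have hβκ : β < κ.ord := (hA.1 b (hBA hb)).1 hβ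
  have hmin : sInf a < sInf b := hab _ (csInf_mem ⟨α, hα⟩) _ (csInf_mem ⟨β, hβ⟩)
  by_contra! hle
  exact Set.disjoint_left.1 (hB a ha b hb hmin) hα
    (mem_biUnion hβ ((hD.levelColoring_le_iff hβκ hαβ hi).1 hle))

theorem exists_injOn_mapsTo_Iio {o o' : Ordinal.{u}} (h : o.card ≤ o'.card) :
    ∃ e : Ordinal.{u} → Ordinal.{u}, InjOn e (Iio o) ∧ MapsTo e (Iio o) (Iio o') := by
  obtain ⟨g⟩ : Nonempty (Iio o ↪ Iio o') := by
    rw [← le_def, Cardinal.mk_Iio_ordinal, Cardinal.mk_Iio_ordinal, Cardinal.lift_le]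
    exact h
  refine ⟨fun x ↦ if hx : x < o then g ⟨x, hx⟩ else 0, fun x hx y hy hxy ↦ ?_,
    fun x hx ↦ by simp only [dif_pos (show x < o from hx)]; exact (g ⟨x, hx⟩).2⟩
  simp only [dif_pos (show x < o from hx), dif_pos (show y < o from hy)] at hxy
  exact congrArg Subtype.val (g.injective (Subtype.ext hxy))

theorem exists_isClosedLevels {lam : Cardinal.{u}} (hlam : ℵ₀ < lam) :
    ∃ D, IsClosedLevels (Order.succ lam) lam lam.ord.cof D := by
  obtain ⟨f, hf⟩ := exists_isFundamentalSeq (o := lam.ord) rfl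
  set p : Ordinal.{u} → Ordinal.{u} := fun i ↦
    if hi : i < lam.ord.cof.ord then (f ⟨i, hi⟩).1 else 0
  have hp {i : Ordinal.{u}} (hi : i < lam.ord.cof.ord) : p i = f ⟨i, hi⟩ := dif_pos hi
  have he (β : Ordinal.{u}) : ∃ e : Ordinal.{u} → Ordinal.{u}, β < (Order.succ lam).ord →
      InjOn e (Iio β) ∧ MapsTo e (Iio β) (Iio lam.ord) := by
    by_cases hβ : β < (Order.succ lam).ord
    · refine (exists_injOn_mapsTo_Iio ?_).imp fun _ h _ ↦ h
      rw [card_ord, ← Order.lt_succ_iff, ← lt_ord]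
      exact hβ
    · exact ⟨id, fun h ↦ absurd h hβ⟩
  choose E hE using he
  refine ⟨fun i β ↦ accClosure (Iio β ∩ E β ⁻¹' Iic (p i)), ⟨?_, ?_, ?_, ?_⟩⟩
  · intro β _ i j hij hj
    refine accClosure_mono (inter_subset_inter_right _ (preimage_mono (Iic_subset_Iic.2 ?_)))
    rw [hp hj, hp (hij.trans_lt hj)]
    exact hf.strictMono.monotone (show (⟨i, _⟩ : Iio _) ≤ ⟨j, hj⟩ from hij)
  · intro β hβ α hαβ
    obtain ⟨_, ⟨i, rfl⟩, hi⟩ := hf.isCofinal_range ⟨E β α, (hE β hβ).2 hαβ⟩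
    refine ⟨i, i.2, subset_accClosure _ ⟨hαβ, ?_⟩⟩
    rw [mem_preimage, mem_Iic, hp i.2]
    exact hi
  · exact fun β _ i _ γ _ hγ h ↦ mem_accClosure_of_forall_exists hγ h
  · intro i hi
    refine ⟨(p i).card + ℵ₀, add_lt_of_lt hlam.le ?_ hlam, fun β hβ ↦ mk_accClosure_le
      (by simp) ?_⟩
    · rw [← lt_ord, hp hi]
      exact (f _).2
    · calc #(Iio β ∩ E β ⁻¹' Iic (p i) : Set Ordinal.{u})
          = #(E β '' (Iio β ∩ E β ⁻¹' Iic (p i))) :=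
            (mk_image_eq_of_injOn _ _ ((hE β hβ).1.mono inter_subset_left)).symm
        _ ≤ #(Iic (p i)) := mk_le_mk_of_subset (image_subset_iff.2 inter_subset_right)
        _ ≤ lift ((p i).card + ℵ₀) := by
          rw [← Iio_insert, mk_insert self_notMem_Iio, Cardinal.mk_Iio_ordinal,
            Cardinal.lift_add, Cardinal.lift_aleph0]
          exact add_le_add_right one_le_aleph0 _

theorem stmt17 (lam : Cardinal) (hinf : ℵ₀ ≤ lam) (hsing : lam.ord.cof < lam) :
    ∃ c, ClosedColoring (Order.succ lam) lam.ord.cof c ∧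
      WitnessU (Order.succ lam) (Order.succ lam) lam.ord.cof lam c := by
  have hlam : ℵ₀ < lam :=
    (aleph0_le_cof_iff.2 (one_lt_cof_iff.2 (isSuccLimit_ord hinf))).trans_lt hsing
  obtain ⟨D, hD⟩ := exists_isClosedLevels hlam
  exact ⟨levelColoring _ D, hD.closedColoring,
    hD.witnessU (isRegular_succ hinf) hlam (Order.lt_succ lam)⟩
end
end

section
/- Suppose θ ∈ reg(κ), χ < κ, and c : [κ]² → θ witnesses U(κ, 2, θ, χ). Then for every infinite cardinal θ' < min(χ, θ), the tree T(c) admits no θ'-ascending path: there is no sequence ⟨f_α : α < κ⟩ with each f_α : θ' → T_α (where T_α = T(c) ∩ ^α θ) such that for all α < β < κ there exist j, j' < θ' with f_α(j) ⊆ f_β(j'). -/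
/-!
Let `g` be a `θ'`-ascending path, let `a α = {g α j | j < θ'}` be its nodes at level `α`, and
`M α = sup (a α) + 1`. Using the regularity of `κ`, thin `κ` out to a `κ`-sized set `J` on which
`M α < β` for `α < β`, all `a α` have the same size `ν ≤ θ' < χ`, and the colours from `g α 0` to
level `M α` are bounded by one `i < θ` (regularity of `θ`, as `θ' < θ`). The sets `a α`, `α ∈ J`,
are then a disjoint family to which `U(κ, 2, θ, χ)` applies with `i`, giving `α < β` in `J` with
all colours between `a α` and `a β` above `i`. But the path connects level `M α` to level `β`: some
node of level `M α` agrees with some `g β j'` below `M α`, in particular at `g α 0`, so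
`c (g α 0) (g β j') ≤ i`.
-/

open Cardinal Set Ordinal

noncomputable section

-- The `max` keeps `sparseEnum f` strictly increasing whatever `f` is.
def sparseEnum (f : Ordinal.{u} → Ordinal.{u}) (ι : Ordinal.{u}) : Ordinal.{u} :=
  ⨆ x : Iio ι, max (sparseEnum f x) (f (sparseEnum f x)) + 1
termination_by ι
decreasing_by exact x.2

section SparseEnum

variable {f : Ordinal.{u} → Ordinal.{u}}

theorem max_sparseEnum_lt {x y : Ordinal.{u}} (h : x < y) :
    max (sparseEnum f x) (f (sparseEnum f x)) < sparseEnum f y := by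
  conv_rhs => rw [sparseEnum]
  exact lt_iSup_add_one (fun z : Iio y => max (sparseEnum f z) (f (sparseEnum f z))) ⟨x, h⟩

theorem sparseEnum_strictMono : StrictMono (sparseEnum f) := fun _ _ h =>
  (le_max_left _ _).trans_lt (max_sparseEnum_lt h)

theorem apply_sparseEnum_lt {x y : Ordinal.{u}} (h : x < y) : f (sparseEnum f x) < sparseEnum f y :=
  (le_max_right _ _).trans_lt (max_sparseEnum_lt h)

theorem sparseEnum_lt_ord {κ : Cardinal.{u}} (hκ : κ.IsRegular) (hf : ∀ x < κ.ord, f x < κ.ord)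
    {ι : Ordinal.{u}} (hι : ι < κ.ord) : sparseEnum f ι < κ.ord := by
  induction ι using WellFoundedLT.induction with
  | _ ι IH =>
    rw [sparseEnum]
    refine lift_iSup_add_one_lt_of_lt_cof ?_ fun x => ?_
    · rw [Cardinal.mk_Iio_ordinal, Cardinal.lift_lift, ← Ordinal.lift_cof, hκ.cof_ord,
        Cardinal.lift_lt, ← Cardinal.lt_ord]
      exact hι
    · have hx := IH x x.2 (x.2.trans hι)
      exact max_lt hx (hf _ hx)

end SparseEnum

theorem exists_hasCard_sparse_subset {κ : Cardinal.{0}} (hκ : κ.IsRegular) {f : Ordinal → Ordinal}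
    (hf : ∀ x < κ.ord, f x < κ.ord) :
    ∃ S ⊆ Iio κ.ord, HasCard S κ ∧ ∀ α ∈ S, ∀ β ∈ S, α < β → f α < β := by
  refine ⟨sparseEnum f '' Iio κ.ord, ?_, ?_, ?_⟩
  · rintro _ ⟨ι, hι, rfl⟩
    exact sparseEnum_lt_ord hκ hf hι
  · rw [HasCard, mk_image_eq_of_injOn _ _ sparseEnum_strictMono.injective.injOn,
      Cardinal.mk_Iio_ordinal, Cardinal.card_ord]
  · rintro _ ⟨x, -, rfl⟩ _ ⟨y, -, rfl⟩ h
    exact apply_sparseEnum_lt (sparseEnum_strictMono.lt_iff_lt.1 h)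

theorem exists_hasCard_subset_forall_eq {κ : Cardinal.{0}} (hκ : κ.IsRegular) {S : Set Ordinal.{0}}
    (hS : HasCard S κ) {β : Type 1} {T : Set β} (hT : #T < Cardinal.lift κ) {f : Ordinal → β}
    (hf : MapsTo f S T) : ∃ J ⊆ S, HasCard J κ ∧ ∃ v ∈ T, ∀ x ∈ J, f x = v := by
  have hreg : (Cardinal.lift.{1} κ).IsRegular := hκ.lift
  obtain ⟨v, hv⟩ := infinite_pigeonhole (hf.restrict f S T) (hS ▸ hreg.aleph0_le)
    (by rwa [hS, hreg.cof_ord])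
  refine ⟨Subtype.val '' (hf.restrict f S T ⁻¹' {v}), by simp, ?_, v, v.2, ?_⟩
  · rw [HasCard, mk_image_eq Subtype.val_injective, hv, hS]
  · rintro _ ⟨x, hx, rfl⟩
    exact congrArg Subtype.val hx

theorem SetLT.disjoint {a b : Set Ordinal} (h : SetLT a b) : Disjoint a b :=
  Set.disjoint_left.2 fun ξ hξa hξb => (h ξ hξa ξ hξb).false

section IncreasingFamily

variable {a : Ordinal → Set Ordinal} {J : Set Ordinal}

theorem disjoint_of_forall_setLT (hlt : ∀ α ∈ J, ∀ β ∈ J, α < β → SetLT (a α) (a β))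
    {α β : Ordinal} (hα : α ∈ J) (hβ : β ∈ J) (hne : α ≠ β) : Disjoint (a α) (a β) := by
  rcases hne.lt_or_gt with h | h
  · exact (hlt α hα β hβ h).disjoint
  · exact (hlt β hβ α hα h).disjoint.symm

theorem isDisjFamily_image {κ χ' : Cardinal} (hJ : HasCard J κ)
    (ha : ∀ α ∈ J, (a α).Nonempty ∧ a α ⊆ Iio κ.ord ∧ HasCard (a α) χ')
    (hlt : ∀ α ∈ J, ∀ β ∈ J, α < β → SetLT (a α) (a β)) : IsDisjFamily κ χ' (a '' J) := by
  have hinj : InjOn a J := fun α hα β hβ hab => by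
    by_contra hne
    have hdisj := disjoint_of_forall_setLT hlt hα hβ hne
    rw [hab, disjoint_self] at hdisj
    exact (ha β hβ).1.ne_empty hdisj
  refine ⟨?_, ?_, ?_⟩
  · rintro _ ⟨α, hα, rfl⟩
    exact (ha α hα).2
  · rw [hinj.pairwiseDisjoint_image]
    exact fun α hα β hβ hne => disjoint_of_forall_setLT hlt hα hβ hne
  · rw [HasCard, mk_image_eq_of_injOn _ _ hinj]
    exact hJ

theorem WitnessU.exists_lt_forall_lt {κ θ χ χ' : Cardinal} {c : Ordinal → Ordinal → Ordinal}
    (hc : WitnessU κ 2 θ χ c) (hχ' : χ' < χ)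
    (hlt : ∀ α ∈ J, ∀ β ∈ J, α < β → SetLT (a α) (a β)) (hA : IsDisjFamily κ χ' (a '' J))
    {i : Ordinal} (hi : i < θ.ord) :
    ∃ α ∈ J, ∃ β ∈ J, α < β ∧ ∀ ξ ∈ a α, ∀ η ∈ a β, i < c ξ η := by
  obtain ⟨B, hBA, hB, hBcol⟩ := hc.2 χ' hχ' _ hA i hi
  obtain ⟨⟨_, hx⟩, ⟨_, hy⟩, hxy⟩ :=
    two_le_iff.1 (by rw [hB, Cardinal.lift_ofNat] : (2 : Cardinal) ≤ #B)
  obtain ⟨α, hα, rfl⟩ := hBA hx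
  obtain ⟨β, hβ, rfl⟩ := hBA hy
  have hne : α ≠ β := by rintro rfl; exact hxy rfl
  rcases hne.lt_or_gt with h | h
  · exact ⟨α, hα, β, hβ, h, hBcol _ hx _ hy (hlt α hα β hβ h)⟩
  · exact ⟨β, hβ, α, hα, h, hBcol _ hy _ hx (hlt β hβ α hα h)⟩

end IncreasingFamily

section AscendingPath

variable (c g : Ordinal.{0} → Ordinal.{0} → Ordinal.{0}) (θ' : Cardinal.{0})

def pathLevel (α : Ordinal) : Set Ordinal := g α '' Iio θ'.ord

instance (α : Ordinal) : Small.{0} (pathLevel g θ' α) := by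
  unfold pathLevel
  infer_instance

def pathBound (α : Ordinal) : Ordinal := sSup (pathLevel g θ' α) + 1

def pathColorBound (α : Ordinal) : Ordinal :=
  sSup (c (g α 0) '' pathLevel g θ' (pathBound g θ' α))

-- `#(pathLevel g θ' α)` lives in `Cardinal.{1}`; this is the `Cardinal.{0}` it lifts, which the
-- pigeonhole over level sizes needs.
def pathLevelCard (α : Ordinal) : Cardinal.{0} := #(Shrink.{0} (pathLevel g θ' α))

variable {c g θ'}

theorem mk_pathLevel_le (α : Ordinal) : #(pathLevel g θ' α) ≤ Cardinal.lift θ' := by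
  refine mk_image_le.trans ?_
  rw [Cardinal.mk_Iio_ordinal, Cardinal.card_ord]

theorem lift_pathLevelCard (α : Ordinal) :
    Cardinal.lift (pathLevelCard g θ' α) = #(pathLevel g θ' α) :=
  lift_mk_shrink'' _

theorem pathLevelCard_le (α : Ordinal) : pathLevelCard g θ' α ≤ θ' := by
  rw [← Cardinal.lift_le.{1}, lift_pathLevelCard]
  exact mk_pathLevel_le α

theorem apply_zero_mem_pathLevel (h0 : 0 < θ'.ord) (α : Ordinal) : g α 0 ∈ pathLevel g θ' α :=
  ⟨0, h0, rfl⟩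

theorem pathLevel_subset_Iio {α o : Ordinal} (hg : ∀ j < θ'.ord, g α j < o) :
    pathLevel g θ' α ⊆ Iio o :=
  image_subset_iff.2 hg

theorem lt_pathBound {α ξ : Ordinal} (hξ : ξ ∈ pathLevel g θ' α) : ξ < pathBound g θ' α :=
  Order.lt_add_one_iff.2 (le_csSup Ordinal.bddAbove_of_small hξ)

theorem pathBound_lt_ord {κ : Cardinal.{0}} (hκ : κ.IsRegular) (hθ'κ : θ' < κ) {α : Ordinal}
    (hg : ∀ j < θ'.ord, g α j < κ.ord) : pathBound g θ' α < κ.ord := by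
  refine (isSuccLimit_ord hκ.aleph0_le).add_one_lt (sSup_lt_of_lt_cof ?_ (pathLevel_subset_Iio hg))
  rw [← Ordinal.lift_cof, hκ.cof_ord]
  exact (mk_pathLevel_le α).trans_lt (Cardinal.lift_lt.2 hθ'κ)

theorem pathColorBound_lt {κ θ : Cardinal.{0}} (hc : IsColoring κ θ c) (hθ : θ.IsRegular)
    (hθ' : θ' < θ) (h0 : 0 < θ'.ord) {α : Ordinal}
    (hg : ∀ j < θ'.ord,
      pathBound g θ' α ≤ g (pathBound g θ' α) j ∧ g (pathBound g θ' α) j < κ.ord) :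
    pathColorBound c g θ' α < θ.ord := by
  refine sSup_lt_of_lt_cof ?_ ?_
  · rw [← Ordinal.lift_cof, hθ.cof_ord]
    exact mk_image_le.trans_lt ((mk_pathLevel_le _).trans_lt (Cardinal.lift_lt.2 hθ'))
  · rintro _ ⟨_, ⟨j, hj, rfl⟩, rfl⟩
    exact hc _ _ ((lt_pathBound (apply_zero_mem_pathLevel h0 α)).trans_le (hg j hj).1) (hg j hj).2

theorem le_pathColorBound {α η j : Ordinal} (h0 : 0 < θ'.ord) (hj : j < θ'.ord)
    (hagree : ∀ ξ < pathBound g θ' α, c ξ (g (pathBound g θ' α) j) = c ξ η) :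
    c (g α 0) η ≤ pathColorBound c g θ' α := by
  rw [← hagree _ (lt_pathBound (apply_zero_mem_pathLevel h0 α))]
  exact le_csSup Ordinal.bddAbove_of_small ⟨_, ⟨j, hj, rfl⟩, rfl⟩

theorem pathLevel_setLT {α β : Ordinal} (hg : ∀ j < θ'.ord, β ≤ g β j)
    (h : pathBound g θ' α ≤ β) : SetLT (pathLevel g θ' α) (pathLevel g θ' β) := by
  rintro ξ hξ _ ⟨j, hj, rfl⟩
  exact (lt_pathBound hξ).trans_le (h.trans (hg j hj))

theorem exists_homogeneous_pathLevels {κ θ : Cardinal.{0}} (hκ : κ.IsRegular) (hθκ : θ < κ)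
    (hθ'κ : θ' < κ) (hbound : ∀ α < κ.ord, pathBound g θ' α < κ.ord)
    (hcolor : ∀ α < κ.ord, pathColorBound c g θ' α < θ.ord) :
    ∃ J ⊆ Iio κ.ord, HasCard J κ ∧ (∀ α ∈ J, ∀ β ∈ J, α < β → pathBound g θ' α < β) ∧
      ∃ ν ≤ θ', ∃ i < θ.ord, ∀ α ∈ J,
        HasCard (pathLevel g θ' α) ν ∧ pathColorBound c g θ' α = i := by
  obtain ⟨S, hSκ, hS, hsparse⟩ := exists_hasCard_sparse_subset hκ hbound
  have hT : #(Iio (Order.succ θ'.ord) ×ˢ Iio θ.ord) < Cardinal.lift κ := by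
    rw [mk_setProd, Cardinal.mk_Iio_ordinal, Cardinal.mk_Iio_ordinal, Cardinal.card_ord]
    refine mul_lt_of_lt (Cardinal.aleph0_le_lift.2 hκ.aleph0_le) ?_ (Cardinal.lift_lt.2 hθκ)
    exact Cardinal.lift_lt.2 <| Cardinal.lt_ord.1 <|
      (isSuccLimit_ord hκ.aleph0_le).succ_lt (Cardinal.ord_lt_ord.2 hθ'κ)
  obtain ⟨J, hJS, hJ, ⟨ν, i⟩, ⟨hν, hi⟩, hJconst⟩ :=
    exists_hasCard_subset_forall_eq hκ hS hT
      (f := fun α => ((pathLevelCard g θ' α).ord, pathColorBound c g θ' α)) fun α hα =>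
        ⟨Order.lt_succ_iff.2 (Cardinal.ord_le_ord.2 (pathLevelCard_le α)), hcolor α (hSκ hα)⟩
  refine ⟨J, hJS.trans hSκ, hJ, fun α hα β hβ => hsparse α (hJS hα) β (hJS hβ), ν.card,
    by simpa using Ordinal.card_le_card (Order.lt_succ_iff.1 hν), i, hi, fun α hα => ?_⟩
  obtain ⟨hνα, hiα⟩ := Prod.mk.inj (hJconst α hα)
  refine ⟨?_, hiα⟩
  rw [HasCard, ← lift_pathLevelCard, ← hνα, Cardinal.card_ord]

end AscendingPath

theorem stmt19_general (κ θ χ θ' : Cardinal) (c : Ordinal → Ordinal → Ordinal)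
    (hκreg : κ.IsRegular)
    (hθreg : θ.IsRegular) (hθκ : θ < κ)
    (hc : WitnessU κ 2 θ χ c)
    (hθ'2 : θ' < χ) (hθ'3 : θ' < θ) :
    -- `T(c)` admits no `θ'`-ascending path, where the `j`-th node of the path at
    -- level `α` is `c (·, g α j) ↾ α` for a witness `g α j ∈ [α, κ)`.
    ¬ ∃ g : Ordinal → Ordinal → Ordinal,
      (∀ α < κ.ord, ∀ j < θ'.ord, α ≤ g α j ∧ g α j < κ.ord) ∧
      ∀ α β : Ordinal, α < β → β < κ.ord →
        ∃ j < θ'.ord, ∃ j' < θ'.ord, ∀ ξ < α, c ξ (g α j) = c ξ (g β j') := by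
  rintro ⟨g, hg, hpath⟩
  have hθ'κ : θ' < κ := hθ'3.trans hθκ
  have hθ'pos : 0 < θ'.ord := by
    obtain ⟨j, hj, -⟩ := hpath 0 1 zero_lt_one
      (one_lt_omega0.trans_le (omega0_le_ord.2 hκreg.aleph0_le))
    exact pos_of_gt hj
  have hbound : ∀ α < κ.ord, pathBound g θ' α < κ.ord := fun α hα =>
    pathBound_lt_ord hκreg hθ'κ fun j hj => (hg α hα j hj).2
  obtain ⟨J, hJκ, hJ, hsparse, ν, hν, i, hi, hJ'⟩ :=
    exists_homogeneous_pathLevels (c := c) hκreg hθκ hθ'κ hbound fun α hα =>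
      pathColorBound_lt hc.1 hθreg hθ'3 hθ'pos (hg _ (hbound α hα))
  have hlt : ∀ α ∈ J, ∀ β ∈ J, α < β → SetLT (pathLevel g θ' α) (pathLevel g θ' β) :=
    fun α hα β hβ h => pathLevel_setLT (fun j hj => (hg β (hJκ hβ) j hj).1) (hsparse α hα β hβ h).le
  have hfam : IsDisjFamily κ ν (pathLevel g θ' '' J) :=
    isDisjFamily_image hJ (fun α hα => ⟨⟨_, apply_zero_mem_pathLevel hθ'pos α⟩,
      pathLevel_subset_Iio fun j hj => (hg α (hJκ hα) j hj).2, (hJ' α hα).1⟩) hlt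
  obtain ⟨α, hα, β, hβ, hαβ, hcol⟩ := hc.exists_lt_forall_lt (hν.trans_lt hθ'2) hlt hfam hi
  obtain ⟨j, hj, j', hj', hagree⟩ := hpath _ β (hsparse α hα β hβ hαβ) (hJκ hβ)
  exact (hcol _ (apply_zero_mem_pathLevel hθ'pos α) _ ⟨j', hj', rfl⟩).not_ge
    ((le_pathColorBound hθ'pos hj hagree).trans_eq (hJ' α hα).2)

theorem stmt19 (κ θ χ θ' : Cardinal) (c : Ordinal → Ordinal → Ordinal)
    (hκreg : κ.IsRegular) (hκunc : ℵ₀ < κ)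
    (hθreg : θ.IsRegular) (hθκ : θ < κ) (hχκ : χ < κ)
    (hc : WitnessU κ 2 θ χ c)
    (hθ'1 : ℵ₀ ≤ θ') (hθ'2 : θ' < χ) (hθ'3 : θ' < θ) :
    -- `T(c)` admits no `θ'`-ascending path, where the `j`-th node of the path at
    -- level `α` is `c (·, g α j) ↾ α` for a witness `g α j ∈ [α, κ)`.
    ¬ ∃ g : Ordinal → Ordinal → Ordinal,
      (∀ α < κ.ord, ∀ j < θ'.ord, α ≤ g α j ∧ g α j < κ.ord) ∧
      ∀ α β : Ordinal, α < β → β < κ.ord →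
        ∃ j < θ'.ord, ∃ j' < θ'.ord, ∀ ξ < α, c ξ (g α j) = c ξ (g β j') :=
  stmt19_general κ θ χ θ' c hκreg hθreg hθκ hc hθ'2 hθ'3
end
end
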